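/- Let A = (Σ, Q, δ) be a circular semi-automaton with n states. If sc(Syn(A)) = 2^n - n, then A is completely reachable. -/

import Mathlib

open Finset

universe u v

variable {Q : Type u} {A : Type v}

/-- Extended transition function on words (lists of letters). -/
def dw (δ : Q → A → Q) (q : Q) (w : List A) : Q := w.foldl δ q

/-- A subset `S` of the state set is reachable if it is the image of the
full state set under some word. -/
def reach [Fintype Q] [DecidableEq Q] (δ : Q → A → Q) (S : Finset Q) : Prop :=
  ∃ w : List A, Finset.univ.image (fun q => dw δ q w) = S

/-- Rank of a word: cardinality of the image of the state set under it. -/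
def rkw [Fintype Q] [DecidableEq Q] (δ : Q → A → Q) (w : List A) : ℕ :=
  (Finset.univ.image (fun q => dw δ q w)).card

/-- Rank of a letter. -/
def rkl [Fintype Q] [DecidableEq Q] (δ : Q → A → Q) (a : A) : ℕ :=
  (Finset.univ.image (fun q => δ q a)).card

/-- A map is a cyclic permutation with a single orbit. -/
def isCyclicPerm (f : Q → Q) : Prop :=
  Function.Bijective f ∧ ∀ p q : Q, ∃ k : ℕ, f^[k] p = q

/-- Two subsets of states are distinguishable in the power automaton:
some word maps exactly one of them to a singleton. -/
def distinguishable [DecidableEq Q] (δ : Q → A → Q) (S T : Finset Q) : Prop :=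
  ∃ u : List A,
    Xor' ((S.image (fun q => dw δ q u)).card = 1)
         ((T.image (fun q => dw δ q u)).card = 1)

/-- The set of synchronizing words. -/
def Syn [Fintype Q] [DecidableEq Q] (δ : Q → A → Q) : Set (List A) :=
  {w | (Finset.univ.image (fun q => dw δ q w)).card = 1}

/-- The Nerode right-congruence of a language. -/
def nerode (L : Set (List A)) : Setoid (List A) where
  r u v := ∀ x : List A, u ++ x ∈ L ↔ v ++ x ∈ L
  iseqv := ⟨fun _ _ => Iff.rfl, fun h x => (h x).symm, fun h1 h2 x => (h1 x).trans (h2 x)⟩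

/-- State complexity of a language: number of Nerode classes. -/
noncomputable def sc (L : Set (List A)) : ℕ := Nat.card (Quotient (nerode L))

/-- Complete reachability. -/
def complReach [Fintype Q] [DecidableEq Q] (δ : Q → A → Q) : Prop :=
  ∀ S : Finset Q, S.Nonempty → ∃ w : List A, Finset.univ.image (fun q => dw δ q w) = S

/-- The permutation group generated by the permutational letters. -/
def permGroup [Fintype Q] [DecidableEq Q] (δ : Q → A → Q) : Subgroup (Equiv.Perm Q) :=
  Subgroup.closure {π : Equiv.Perm Q | ∃ a : A, ∀ q : Q, π q = δ q a}


/-!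
Every synchronizing word lies in one Nerode class of `Syn δ`, and the class of any other word `w`
is determined by the reachable non-singleton set `δ(Q, w)`; so `sc (Syn δ) - 1` bounds the number
of reachable non-singletons from below. Maximal state complexity forces a synchronizing word, which
the cyclic letter carries to every singleton, so all `n` singletons are reachable too. That makes
at least `2 ^ n - 1` reachable sets, i.e. every nonempty set.
-/

lemma dw_append (δ : Q → A → Q) (q : Q) (u v : List A) :
    dw δ q (u ++ v) = dw δ (dw δ q u) v :=
  List.foldl_append ..

lemma dw_replicate (δ : Q → A → Q) (c : A) (k : ℕ) (q : Q) :
    dw δ q (List.replicate k c) = (fun x => δ x c)^[k] q := by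
  induction k generalizing q with
  | zero => rfl
  | succ k ih => exact ih (δ q c)

lemma sc_empty : sc (∅ : Set (List A)) = 1 :=
  Nat.card_eq_one_iff_unique.mpr
    ⟨⟨Quotient.ind₂ fun _ _ => Quotient.sound fun _ => Iff.rfl⟩, ⟨Quotient.mk _ []⟩⟩

lemma nonempty_of_sc_ne_one {L : Set (List A)} (h : sc L ≠ 1) : L.Nonempty :=
  Set.nonempty_iff_ne_empty.mpr fun hL => h (hL ▸ sc_empty)

lemma complReach_of_card_le_one [Fintype Q] [DecidableEq Q] (δ : Q → A → Q)
    (hQ : Fintype.card Q ≤ 1) : complReach δ := by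
  intro S ⟨q, hq⟩
  have : Subsingleton Q := Fintype.card_le_one_iff_subsingleton.mp hQ
  obtain rfl : S = univ := eq_univ_of_forall fun p => Subsingleton.elim q p ▸ hq
  exact ⟨[], image_id⟩

section WordImage

variable [Fintype Q] [DecidableEq Q]

def wordImage (δ : Q → A → Q) (w : List A) : Finset Q :=
  univ.image fun q => dw δ q w

lemma mem_Syn_iff (δ : Q → A → Q) (w : List A) : w ∈ Syn δ ↔ (wordImage δ w).card = 1 :=
  Iff.rfl

lemma wordImage_append (δ : Q → A → Q) (u v : List A) :
    wordImage δ (u ++ v) = (wordImage δ u).image fun q => dw δ q v := by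
  simp only [wordImage, image_image]
  exact image_congr fun q _ => dw_append δ q u v

lemma append_mem_Syn (δ : Q → A → Q) {u : List A} (hu : u ∈ Syn δ) (v : List A) :
    u ++ v ∈ Syn δ := by
  obtain ⟨p, hp⟩ := card_eq_one.mp ((mem_Syn_iff δ u).mp hu)
  rw [mem_Syn_iff, wordImage_append, hp, image_singleton, card_singleton]

lemma nerode_Syn_of_mem (δ : Q → A → Q) {u v : List A} (hu : u ∈ Syn δ)
    (hv : v ∈ Syn δ) :
    nerode (Syn δ) u v :=
  fun x => iff_of_true (append_mem_Syn δ hu x) (append_mem_Syn δ hv x)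

lemma nerode_Syn_of_wordImage_eq (δ : Q → A → Q) {u v : List A}
    (h : wordImage δ u = wordImage δ v) : nerode (Syn δ) u v := by
  intro x
  rw [mem_Syn_iff, mem_Syn_iff, wordImage_append, wordImage_append, h]

lemma reach_singleton_of_isCyclicPerm (δ : Q → A → Q) {c : A}
    (hc : isCyclicPerm fun q => δ q c) {w : List A} (hw : w ∈ Syn δ) (q : Q) :
    reach δ {q} := by
  obtain ⟨p, hp⟩ := card_eq_one.mp ((mem_Syn_iff δ w).mp hw)
  obtain ⟨k, hk⟩ := hc.2 p q
  refine ⟨w ++ List.replicate k c, ?_⟩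
  change wordImage δ _ = _
  rw [wordImage_append, hp, image_singleton, dw_replicate, hk]

open Classical in
lemma sc_Syn_le (δ : Q → A → Q) :
    sc (Syn δ) ≤ #{S | reach δ S ∧ S.card ≠ 1} + 1 := by
  let code : Quotient (nerode (Syn δ)) → Option {S : Finset Q // reach δ S ∧ S.card ≠ 1} :=
    fun t => if h : t.out ∈ Syn δ then none
      else some ⟨wordImage δ t.out, ⟨t.out, rfl⟩, h⟩
  have code_injective : Function.Injective code := by
    intro t₁ t₂ h
    rw [← Quotient.out_eq t₁, ← Quotient.out_eq t₂]
    refine Quotient.sound ?_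
    by_cases h₁ : t₁.out ∈ Syn δ <;> by_cases h₂ : t₂.out ∈ Syn δ <;>
      simp only [code, h₁, h₂, dite_true, dite_false, reduceCtorEq, Option.some.injEq,
        Subtype.mk.injEq] at h
    · exact nerode_Syn_of_mem δ h₁ h₂
    · exact nerode_Syn_of_wordImage_eq δ h
  calc sc (Syn δ) ≤ Nat.card (Option {S : Finset Q // reach δ S ∧ S.card ≠ 1}) :=
        Nat.card_le_card_of_injective code code_injective
    _ = #{S | reach δ S ∧ S.card ≠ 1} + 1 := by
        rw [Finite.card_option, Nat.card_eq_fintype_card, Fintype.card_subtype]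

open Classical in
lemma card_reach_singleton (δ : Q → A → Q) (hsingle : ∀ q, reach δ {q}) :
    #{S | reach δ S ∧ S.card = 1} = Fintype.card Q := by
  have hsingletons :
      ({S | reach δ S ∧ S.card = 1} : Finset (Finset Q)) = powersetCard 1 univ := by
    ext S
    simp only [mem_filter, mem_univ, true_and, mem_powersetCard, subset_univ,
      and_iff_right_iff_imp]
    intro hS
    obtain ⟨q, rfl⟩ := card_eq_one.mp hS
    exact hsingle q
  rw [hsingletons, card_powersetCard, Nat.choose_one_right, card_univ]

open Classical in
lemma sc_Syn_add_card_le (δ : Q → A → Q) (hsingle : ∀ q, reach δ {q}) :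
    sc (Syn δ) + Fintype.card Q ≤ #{S | reach δ S} + 1 := by
  have hsc := sc_Syn_le δ
  have hsplit := card_filter_add_card_filter_not (s := ({S | reach δ S} : Finset (Finset Q)))
    (fun S => S.card = 1)
  simp only [filter_filter, ← ne_eq] at hsplit
  rw [card_reach_singleton δ hsingle] at hsplit
  omega

open Classical in
lemma complReach_of_two_pow_le (δ : Q → A → Q)
    (h : 2 ^ Fintype.card Q ≤ #{S | reach δ S} + 1) : complReach δ := by
  intro S hS
  have : Nonempty Q := hS.to_subtype.map Subtype.val
  have hsub : ({S | reach δ S} : Finset (Finset Q)) ⊆ univ.erase ∅ := by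
    intro T hT
    obtain ⟨w, rfl⟩ := (mem_filter.mp hT).2
    exact mem_erase.mpr ⟨(univ_nonempty.image _).ne_empty, mem_univ _⟩
  have hcard : #(univ.erase (∅ : Finset Q)) = 2 ^ Fintype.card Q - 1 := by
    rw [card_erase_of_mem (mem_univ _), card_univ, Fintype.card_finset]
  have hS' : S ∈ ({S | reach δ S} : Finset (Finset Q)) := by
    rw [eq_of_subset_of_card_le hsub (by omega)]
    exact mem_erase.mpr ⟨hS.ne_empty, mem_univ _⟩
  exact (mem_filter.mp hS').2

end WordImage

theorem complReach_of_circular_sc_max [Fintype Q] [DecidableEq Q]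
    (δ : Q → A → Q) (n : ℕ) (hn : Fintype.card Q = n)
    (hb : ∃ c : A, isCyclicPerm (fun q => δ q c))
    (h : sc (Syn δ) = 2 ^ n - n) :
    complReach δ := by
  obtain ⟨c, hc⟩ := hb
  rcases le_or_gt n 1 with hn1 | hn1
  · exact complReach_of_card_le_one δ (hn ▸ hn1)
  have hpow : n + 2 ≤ 2 ^ n := by
    obtain ⟨m, rfl⟩ : ∃ m, n = m + 2 := ⟨n - 2, by omega⟩
    have := Nat.lt_two_pow_self (n := m)
    rw [pow_succ, pow_succ]
    omega
  obtain ⟨w, hw⟩ : (Syn δ).Nonempty := nonempty_of_sc_ne_one (by omega)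
  apply complReach_of_two_pow_le
  have := sc_Syn_add_card_le δ (reach_singleton_of_isCyclicPerm δ hc hw)
  subst hn
  omega
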